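/- Suppose in addition there are a sequence c̄ : ℕ → ℝ with 0 ≤ c̄(k) and ω_N(k) ≥ ξ·c̄(k) for all k, and a constant κ_ω > 0 with ω_T(k) ≤ κ_ω for all k. Then for every k ∈ ℕ: ξ·Σ_{ν ≤ k, ν ∈ N∖T}(ω_T(ν) + c̄(ν)) ≤ Σ_{ν ≤ k, ν ∈ N∖T}(ω_T(ν) + ω_N(ν)) ≤ κ_N·(1 + √(κ_T² + κ_ω²)/(β·η)), where κ_T = 2·κ_gap·√ς + (4κ_tan/κ_t)·[log(4κ_tan/(κ_t·√ς)) − 1] and κ_N = κ_gap + (κ_tan/(κ_t·√ς))·log(1 + κ_T²/ς). -/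

import Mathlib

/-!
Along the iterations the potential
`ψ k + κt η √(Γ k + ς) - κtan η² log (Γ k + ς) + η ∑_{ν < k, ν ∈ N} ω_N ν`
is nonincreasing: on a tangential step the increments of `√(Γ + ς)` and `log (Γ + ς)` are
controlled by `α ω_T²` and `α² ω_T²`, and a normal step pays `η ω_N`. Since `ψ ≥ ψ_low`,
`√(Γ k + ς)` grows at most logarithmically in itself, hence stays below `κT`; then the
cumulated normal measure stays below `κN`. On an iteration in `N ∖ T` the switching test
fails, so `ω_T ≤ ω_N √(κT² + κω²) / (β η)`, and summing gives the bound.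
-/

open Real Finset

lemma sqrt_add_sub_sqrt_le {c d : ℝ} (hc : 0 ≤ c) (hd : 0 ≤ d) :
    √(c + d) - √c ≤ d / √(c + d) := by
  rcases (sqrt_nonneg (c + d)).eq_or_lt with h | h
  · rw [← h, div_zero, zero_sub, neg_nonpos]
    exact sqrt_nonneg c
  · rw [le_div_iff₀ h, sub_mul, mul_self_sqrt (by positivity)]
    have := mul_le_mul_of_nonneg_left (sqrt_le_sqrt (le_add_of_nonneg_right hd : c ≤ c + d))
      (sqrt_nonneg c)
    rw [mul_self_sqrt hc] at this
    linarith

lemma div_add_le_log_add_sub_log {c d : ℝ} (hc : 0 < c) (hd : 0 ≤ d) :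
    d / (c + d) ≤ log (c + d) - log c := by
  have h := one_sub_inv_le_log_of_pos (div_pos (add_pos_of_pos_of_nonneg hc hd) hc)
  rwa [log_div (by positivity) hc.ne', inv_div, one_sub_div (by positivity), add_sub_cancel_left]
    at h

lemma log_le_div_add_log_sub_one {t a : ℝ} (ht : 0 < t) (ha : 0 < a) :
    log t ≤ t / a + log a - 1 := by
  have h := log_le_sub_one_of_pos (div_pos ht ha)
  rw [log_div ht.ne' ha.ne'] at h
  linarith

lemma nonneg_of_add_sq_recursion {Γ ω : ℕ → ℝ} {T : Set ℕ} (hΓ0 : Γ 0 = 0)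
    (hΓT : ∀ k ∈ T, Γ (k + 1) = Γ k + ω k ^ 2) (hΓN : ∀ k, k ∉ T → Γ (k + 1) = Γ k) (k : ℕ) :
    0 ≤ Γ k := by
  refine hΓ0 ▸ monotone_nat_of_le_succ (fun k ↦ ?_) (Nat.zero_le k)
  by_cases hk : k ∈ T
  · rw [hΓT k hk]; exact le_add_of_nonneg_right (sq_nonneg _)
  · rw [hΓN k hk]

theorem sqrt_growth_add_normal_sum_le {η ς κt κtan : ℝ} {ωT ωN Γ α ψ ψp : ℕ → ℝ} {T N : Set ℕ}
    [DecidablePred (· ∈ N)] (hη : 0 < η) (hς : 0 < ς) (hκt : 0 ≤ κt) (hκtan : 0 ≤ κtan)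
    (hΓ : ∀ k, 0 ≤ Γ k) (hΓ0 : Γ 0 = 0)
    (hΓT : ∀ k ∈ T, Γ (k + 1) = Γ k + ωT k ^ 2) (hΓN : ∀ k, k ∉ T → Γ (k + 1) = Γ k)
    (hα : ∀ k, α k = η / √(Γ k + ωT k ^ 2 + ς))
    (hψN : ∀ k ∈ N, ψp k - ψ k ≤ -(η * ωN k)) (hψN' : ∀ k, k ∉ N → ψp k = ψ k)
    (hψT : ∀ k ∈ T, ψ (k + 1) - ψp k ≤ -(κt * α k * ωT k ^ 2) + κtan * α k ^ 2 * ωT k ^ 2)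
    (hψT' : ∀ k, k ∉ T → ψ (k + 1) = ψp k) (k : ℕ) :
    κt * η * (√(Γ k + ς) - √ς) + η * ∑ ν ∈ (range k).filter (· ∈ N), ωN ν
      ≤ ψ 0 - ψ k + κtan * η ^ 2 * (log (Γ k + ς) - log ς) := by
  let Φ k := ψ k + κt * η * √(Γ k + ς) - κtan * η ^ 2 * log (Γ k + ς)
    + η * ∑ ν ∈ (range k).filter (· ∈ N), ωN ν
  suffices Φ k ≤ Φ 0 by
    simp only [Φ, hΓ0, zero_add, range_zero, filter_empty, sum_empty] at this
    linarith
  refine antitone_nat_of_succ_le (fun k ↦ ?_) (Nat.zero_le k)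
  have hnormal : ψp k - ψ k + η * (if k ∈ N then ωN k else 0) ≤ 0 := by
    split_ifs with hkN
    · linarith [hψN k hkN]
    · simp [hψN' k hkN]
  simp only [Φ, sum_filter, sum_range_succ]
  by_cases hkT : k ∈ T
  · have hψ := hψT k hkT
    have hα' : α k = η / √(Γ k + ς + ωT k ^ 2) := by rw [hα, add_right_comm]
    have hΓ' : Γ (k + 1) + ς = Γ k + ς + ωT k ^ 2 := by rw [hΓT k hkT, add_right_comm]
    have hc : 0 < Γ k + ς := add_pos_of_nonneg_of_pos (hΓ k) hς
    set c := Γ k + ς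
    set ω := ωT k
    have hsqrt := mul_le_mul_of_nonneg_left (sqrt_add_sub_sqrt_le hc.le (sq_nonneg ω))
      (by positivity : 0 ≤ κt * η)
    have hlog := mul_le_mul_of_nonneg_left (div_add_le_log_add_sub_log hc (sq_nonneg ω))
      (by positivity : 0 ≤ κtan * η ^ 2)
    have hα1 : κt * α k * ω ^ 2 = κt * η * (ω ^ 2 / √(c + ω ^ 2)) := by rw [hα']; ring
    have hα2 : κtan * α k ^ 2 * ω ^ 2 = κtan * η ^ 2 * (ω ^ 2 / (c + ω ^ 2)) := by
      rw [hα', div_pow, sq_sqrt (by positivity)]; ring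
    rw [hΓ']
    linarith
  · rw [hΓN k hkT, hψT' k hkT]
    linarith

lemma sqrt_le_of_sqrt_sub_le_log_sub {η ς κt κtan D S x : ℝ} (hη : 0 < η) (hη1 : η ≤ 1)
    (hς : 0 < ς) (hκt : 0 < κt) (hκtan : 0 < κtan) (hκtς : κt * √ς ≤ 1) (hx : 0 < x)
    (hS : 0 ≤ S) (h : κt * η * (√x - √ς) + η * S ≤ D + κtan * η ^ 2 * (log x - log ς)) :
    √x ≤ 2 * ((1 + D) / (η * κt * √ς)) * √ς
      + 4 * κtan / κt * (log (4 * κtan / (κt * √ς)) - 1) := by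
  set s := √x
  set σ := √ς
  set A := 4 * κtan / (κt * σ) with hA_def
  have hs : 0 < s := sqrt_pos.mpr hx
  have hσ : 0 < σ := sqrt_pos.mpr hς
  have hA : 0 < A := by positivity
  have hlog : log x - log ς = 2 * log (s / σ) := by
    rw [log_div hs.ne' hσ.ne', log_sqrt hx.le, log_sqrt hς.le]
    ring
  -- the tangent line of `log` at `A` absorbs the logarithm into half of the linear term
  have hsA : 2 * κtan * η ^ 2 * log (s / σ)
      ≤ κt * η ^ 2 * s / 2 + 2 * κtan * η ^ 2 * (log A - 1) :=
    calc _ ≤ 2 * κtan * η ^ 2 * (s / σ / A + log A - 1) := by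
          gcongr; exact log_le_div_add_log_sub_one (div_pos hs hσ) hA
      _ = _ := by rw [hA_def]; field_simp; ring
  have h1A : 2 * κtan * (1 - log A) ≤ κt * σ / 2 := by
    have := log_le_div_add_log_sub_one one_pos hA
    rw [log_one, show 1 / A = κt * σ / (4 * κtan) by rw [hA_def]; field_simp] at this
    have : 1 - log A ≤ κt * σ / (4 * κtan) := by linarith
    rw [le_div_iff₀ (by positivity)] at this
    linarith
  have hηs : κt * η ^ 2 * s ≤ κt * η * s :=
    mul_le_mul_of_nonneg_right (mul_le_mul_of_nonneg_left (by nlinarith) hκt.le) hs.le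
  -- the constant terms are paid by `κt σ ≤ 1`, as `η + η (1 - η) / 2 ≤ 1`
  have key : κt * η * s ≤ 2 * (1 + D) + 4 * κtan * η * (log A - 1) := by
    have hηS : 0 ≤ η * S := mul_nonneg hη.le hS
    have e2 := mul_le_mul_of_nonneg_left h1A (by nlinarith : (0:ℝ) ≤ η * (1 - η))
    have e3 : 0 ≤ κt * σ * ((1 - η) * (1 - η / 2)) :=
      mul_nonneg (by positivity) (by nlinarith)
    rw [hlog] at h
    linarith
  rw [show 2 * ((1 + D) / (η * κt * σ)) * σ + 4 * κtan / κt * (log A - 1)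
      = (2 * (1 + D) + 4 * κtan * η * (log A - 1)) / (κt * η) by rw [hA_def]; field_simp,
    le_div_iff₀ (by positivity)]
  linarith

lemma le_of_sqrt_sub_le_log_sub {η ς κt κtan D S x K : ℝ} (hη : 0 < η) (hη1 : η ≤ 1)
    (hς : 0 < ς) (hκt : 0 < κt) (hκtan : 0 ≤ κtan) (hκtς : κt * √ς ≤ 1) (hD : 0 ≤ D)
    (hςx : ς ≤ x) (hxK : x ≤ K ^ 2)
    (h : κt * η * (√x - √ς) + η * S ≤ D + κtan * η ^ 2 * (log x - log ς)) :
    S ≤ (1 + D) / (η * κt * √ς) + κtan / (κt * √ς) * log (1 + K ^ 2 / ς) := by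
  set c := κt * √ς
  set L := log (1 + K ^ 2 / ς)
  have hc : 0 < c := mul_pos hκt (sqrt_pos.mpr hς)
  have hsqrt : 0 ≤ √x - √ς := sub_nonneg.mpr (sqrt_le_sqrt hςx)
  have hL : 0 ≤ L := log_nonneg (le_add_of_nonneg_right (by positivity))
  have hlog : log x - log ς ≤ L := by
    rw [← log_div (by linarith) hς.ne']
    refine log_le_log (div_pos (by linarith) hς) ?_
    have : x / ς ≤ K ^ 2 / ς := div_le_div_of_nonneg_right hxK hς.le
    linarith
  have hηS : η * S ≤ D + κtan * η ^ 2 * L := by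
    have := mul_le_mul_of_nonneg_left hlog (by positivity : 0 ≤ κtan * η ^ 2)
    nlinarith [mul_nonneg (mul_pos hκt hη).le hsqrt]
  have hD' : D ≤ (1 + D) / c := by
    rw [le_div_iff₀ hc]; nlinarith
  have hL' : κtan * η * L ≤ κtan * L / c := by
    rw [le_div_iff₀ hc]
    nlinarith [mul_nonneg hκtan hL, mul_le_mul hη1 hκtς hc.le zero_le_one]
  rw [← mul_le_mul_iff_right₀ hη]
  calc η * S ≤ D + κtan * η ^ 2 * L := hηS
    _ ≤ (1 + D) / c + η * (κtan * L / c) := by nlinarith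
    _ = η * ((1 + D) / (η * κt * √ς) + κtan / c * L) := by rw [mul_assoc η]; field_simp; ring

lemma add_le_one_add_div_mul_of_mul_div_sqrt_lt {β η ω n d C : ℝ} (hβ : 0 < β) (hη : 0 < η)
    (hd : 0 < d) (hn : 0 ≤ n) (hdC : √d ≤ C) (h : β * (η / √d) * ω < n) :
    ω + n ≤ (1 + C / (β * η)) * n := by
  have hsd : 0 < √d := sqrt_pos.mpr hd
  rw [show β * (η / √d) * ω = β * η * ω / √d by ring, div_lt_iff₀ hsd] at h
  have hω : ω ≤ n * C / (β * η) := by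
    rw [le_div_iff₀ (mul_pos hβ hη)]
    nlinarith [mul_le_mul_of_nonneg_left hdC hn]
  linarith [show (1 + C / (β * η)) * n = n + n * C / (β * η) by ring]

lemma sum_le_mul_sum_of_subset {ι R : Type*} [CommSemiring R] [PartialOrder R] [IsOrderedRing R]
    {s t : Finset ι} {f g : ι → R} {M : R} (hst : s ⊆ t) (hM : 0 ≤ M)
    (hg : ∀ i ∈ t, 0 ≤ g i) (hfg : ∀ i ∈ s, f i ≤ M * g i) :
    ∑ i ∈ s, f i ≤ M * ∑ i ∈ t, g i :=
  calc ∑ i ∈ s, f i ≤ ∑ i ∈ s, M * g i := sum_le_sum hfg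
    _ = M * ∑ i ∈ s, g i := (mul_sum s g M).symm
    _ ≤ M * ∑ i ∈ t, g i :=
      mul_le_mul_of_nonneg_left (sum_le_sum_of_subset_of_nonneg hst fun i hi _ ↦ hg i hi) hM

theorem stmt18_general
    (η ς β κt κtan ξ : ℝ)
    (hη1 : 0 < η) (hη2 : η ≤ 1) (hς1 : 0 < ς) (hβ : 0 < β)
    (hκt1 : 0 < κt) (hκtan : 0 < κtan)
    (hξ2 : ξ ≤ 1)
    (hκtς : κt * Real.sqrt ς ≤ 1)
    (ωT ωN : ℕ → ℝ) (hωT : ∀ k, 0 ≤ ωT k) (hωN : ∀ k, 0 ≤ ωN k)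
    (T N : Set ℕ) [DecidablePred (· ∈ T)] [DecidablePred (· ∈ N)]
    (Γ α : ℕ → ℝ)
    (hΓ0 : Γ 0 = 0)
    (hΓT : ∀ k ∈ T, Γ (k + 1) = Γ k + ωT k ^ 2)
    (hΓN : ∀ k, k ∉ T → Γ (k + 1) = Γ k)
    (hα : ∀ k, α k = η / Real.sqrt (Γ k + ωT k ^ 2 + ς))
    (hswitch : ∀ k, k ∈ T ↔ ωN k ≤ β * α k * ωT k)
    (ψ ψp : ℕ → ℝ)
    (hψN : ∀ k ∈ N, ψp k - ψ k ≤ -(η * ωN k))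
    (hψN' : ∀ k, k ∉ N → ψp k = ψ k)
    (hψT : ∀ k ∈ T, ψ (k + 1) - ψp k ≤ -(κt * α k * ωT k ^ 2) + κtan * α k ^ 2 * ωT k ^ 2)
    (hψT' : ∀ k, k ∉ T → ψ (k + 1) = ψp k)
    (ψlow : ℝ) (hlow : ∀ k, ψlow ≤ ψ k)
    (κgap : ℝ) (hκgap : κgap = (1 + ψ 0 - ψlow) / (η * κt * Real.sqrt ς))
    (cbar : ℕ → ℝ) (hcbarN : ∀ k, ξ * cbar k ≤ ωN k)
    (κω : ℝ) (hωTb : ∀ k, ωT k ≤ κω)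
    (κT κN : ℝ)
    (hκT : κT = 2 * κgap * Real.sqrt ς
      + (4 * κtan / κt) * (Real.log (4 * κtan / (κt * Real.sqrt ς)) - 1))
    (hκN : κN = κgap + (κtan / (κt * Real.sqrt ς)) * Real.log (1 + κT ^ 2 / ς)) :
    ∀ k : ℕ,
      ξ * ∑ ν ∈ (Finset.range (k + 1)).filter (fun ν => ν ∈ N ∧ ν ∉ T), (ωT ν + cbar ν)
          ≤ ∑ ν ∈ (Finset.range (k + 1)).filter (fun ν => ν ∈ N ∧ ν ∉ T), (ωT ν + ωN ν)
      ∧ ∑ ν ∈ (Finset.range (k + 1)).filter (fun ν => ν ∈ N ∧ ν ∉ T), (ωT ν + ωN ν)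
          ≤ κN * (1 + Real.sqrt (κT ^ 2 + κω ^ 2) / (β * η)) := by
  have hΓ := nonneg_of_add_sq_recursion hΓ0 hΓT hΓN
  have hdescent : ∀ k, κt * η * (√(Γ k + ς) - √ς) + η * ∑ ν ∈ (range k).filter (· ∈ N), ωN ν
      ≤ (ψ 0 - ψlow) + κtan * η ^ 2 * (Real.log (Γ k + ς) - Real.log ς) := fun k ↦
    (sqrt_growth_add_normal_sum_le hη1 hς1 hκt1.le hκtan.le hΓ hΓ0 hΓT hΓN hα hψN hψN' hψT
      hψT' k).trans (by linarith [hlow k])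
  have hΓbound : ∀ k, Γ k + ς ≤ κT ^ 2 := fun k ↦ by
    refine (sqrt_le_iff.mp ?_).2
    rw [hκT, hκgap, add_sub_assoc]
    exact sqrt_le_of_sqrt_sub_le_log_sub hη1 hη2 hς1 hκt1 hκtan hκtς (by linarith [hΓ k])
      (sum_nonneg fun ν _ ↦ hωN ν) (hdescent k)
  have hnormal : ∀ k, ∑ ν ∈ (range k).filter (· ∈ N), ωN ν ≤ κN := fun k ↦ by
    rw [hκN, hκgap, add_sub_assoc]
    exact le_of_sqrt_sub_le_log_sub hη1 hη2 hς1 hκt1 hκtan.le hκtς (sub_nonneg.mpr (hlow 0))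
      (by linarith [hΓ k]) (hΓbound k) (hdescent k)
  intro k
  refine ⟨?_, ?_⟩
  · rw [mul_sum]
    exact sum_le_sum fun ν _ ↦ by nlinarith [hcbarN ν, hωT ν]
  set C := √(κT ^ 2 + κω ^ 2)
  have hpoint : ∀ ν ∈ (range (k + 1)).filter (fun ν => ν ∈ N ∧ ν ∉ T),
      ωT ν + ωN ν ≤ (1 + C / (β * η)) * ωN ν := fun ν hν ↦ by
    have hνT := (mem_filter.mp hν).2.2
    have hC : √(Γ ν + ωT ν ^ 2 + ς) ≤ C :=
      sqrt_le_sqrt (by linarith [hΓbound ν, pow_le_pow_left₀ (hωT ν) (hωTb ν) 2])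
    have hswitched := not_le.mp (mt (hswitch ν).mpr hνT)
    rw [hα] at hswitched
    exact add_le_one_add_div_mul_of_mul_div_sqrt_lt hβ hη1 (by nlinarith [hΓ ν]) (hωN ν) hC
      hswitched
  calc _ ≤ (1 + C / (β * η)) * ∑ ν ∈ (range (k + 1)).filter (· ∈ N), ωN ν :=
        sum_le_mul_sum_of_subset (monotone_filter_right _ fun _ _ h ↦ h.1) (by positivity)
          (fun ν _ ↦ hωN ν) hpoint
    _ ≤ (1 + C / (β * η)) * κN := mul_le_mul_of_nonneg_left (hnormal _) (by positivity)
    _ = _ := mul_comm _ _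

theorem stmt18
    (η ς β κt κtan ξ : ℝ)
    (hη1 : 0 < η) (hη2 : η ≤ 1) (hς1 : 0 < ς) (hς2 : ς ≤ 1/2) (hβ : 0 < β)
    (hκt1 : 0 < κt) (hκt2 : κt ≤ 1/2) (hκtan : 0 < κtan)
    (hξ1 : 0 < ξ) (hξ2 : ξ ≤ 1)
    (hκtς : κt * Real.sqrt ς ≤ 1)
    (ωT ωN : ℕ → ℝ) (hωT : ∀ k, 0 ≤ ωT k) (hωN : ∀ k, 0 ≤ ωN k)
    (T N : Set ℕ) [DecidablePred (· ∈ T)] [DecidablePred (· ∈ N)]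
    (Γ α : ℕ → ℝ)
    (hΓ0 : Γ 0 = 0)
    (hΓT : ∀ k ∈ T, Γ (k + 1) = Γ k + ωT k ^ 2)
    (hΓN : ∀ k, k ∉ T → Γ (k + 1) = Γ k)
    (hα : ∀ k, α k = η / Real.sqrt (Γ k + ωT k ^ 2 + ς))
    (hswitch : ∀ k, k ∈ T ↔ ωN k ≤ β * α k * ωT k)
    (hTN : ∀ k, k ∉ T → k ∈ N)
    (ψ ψp : ℕ → ℝ)
    (hψN : ∀ k ∈ N, ψp k - ψ k ≤ -(η * ωN k))
    (hψN' : ∀ k, k ∉ N → ψp k = ψ k)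
    (hψT : ∀ k ∈ T, ψ (k + 1) - ψp k ≤ -(κt * α k * ωT k ^ 2) + κtan * α k ^ 2 * ωT k ^ 2)
    (hψT' : ∀ k, k ∉ T → ψ (k + 1) = ψp k)
    (ψlow : ℝ) (hlow : ∀ k, ψlow ≤ ψ k)
    (κgap : ℝ) (hκgap : κgap = (1 + ψ 0 - ψlow) / (η * κt * Real.sqrt ς))
    (cbar : ℕ → ℝ) (hcbar : ∀ k, 0 ≤ cbar k) (hcbarN : ∀ k, ξ * cbar k ≤ ωN k)
    (κω : ℝ) (hκω : 0 < κω) (hωTb : ∀ k, ωT k ≤ κω)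
    (κT κN : ℝ)
    (hκT : κT = 2 * κgap * Real.sqrt ς
      + (4 * κtan / κt) * (Real.log (4 * κtan / (κt * Real.sqrt ς)) - 1))
    (hκN : κN = κgap + (κtan / (κt * Real.sqrt ς)) * Real.log (1 + κT ^ 2 / ς)) :
    ∀ k : ℕ,
      ξ * ∑ ν ∈ (Finset.range (k + 1)).filter (fun ν => ν ∈ N ∧ ν ∉ T), (ωT ν + cbar ν)
          ≤ ∑ ν ∈ (Finset.range (k + 1)).filter (fun ν => ν ∈ N ∧ ν ∉ T), (ωT ν + ωN ν)
      ∧ ∑ ν ∈ (Finset.range (k + 1)).filter (fun ν => ν ∈ N ∧ ν ∉ T), (ωT ν + ωN ν)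
          ≤ κN * (1 + Real.sqrt (κT ^ 2 + κω ^ 2) / (β * η)) :=
  stmt18_general η ς β κt κtan ξ hη1 hη2 hς1 hβ hκt1 hκtan hξ2 hκtς ωT ωN hωT hωN T N Γ α hΓ0 hΓT
    hΓN hα hswitch ψ ψp hψN hψN' hψT hψT' ψlow hlow κgap hκgap cbar hcbarN κω hωTb κT κN hκT hκN
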